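/- Let Ω ⊆ ℂ be open, let h, g : Ω → ℂ be holomorphic, and set f = h + conj ∘ g. Let I ⊆ ℝ be an open interval and let γ : I → Ω be real-analytic with g'(γ(t)) = e^{it} · h'(γ(t)) for all t ∈ I, and set ψ(t) = 2 Re( e^{i t/2} h'(γ(t)) γ'(t) ). Then for every compact interval [a,b] ⊆ I, either ψ has only finitely many zeros in [a,b], or ψ vanishes identically on [a,b], and in the latter case f ∘ γ is constant on [a,b]. -/

import Mathlib

/-!
`ψ` is real-analytic on `I`, so by the identity theorem its zeros in a compact subinterval are
finite unless `ψ` vanishes on all of `I`. The relation `g' ∘ γ = e^{it} h' ∘ γ` turns the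
derivative of `f ∘ γ` into `h'γ' + conj (g'γ') = e^{-it/2} ψ`, so if `ψ ≡ 0` then `f ∘ γ` is
constant.
-/

open Filter Metric Set Topology

noncomputable section

/-- The Wirtinger derivative ∂f = (1/2)(∂f/∂x − i ∂f/∂y). -/
def wDz (f : ℂ → ℂ) (z : ℂ) : ℂ :=
  (fderiv ℝ f z 1 - Complex.I * fderiv ℝ f z Complex.I) / 2

/-- The Wirtinger derivative ∂̄f = (1/2)(∂f/∂x + i ∂f/∂y). -/
def wDzbar (f : ℂ → ℂ) (z : ℂ) : ℂ :=
  (fderiv ℝ f z 1 + Complex.I * fderiv ℝ f z Complex.I) / 2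

/-- A harmonic mapping on an open set: locally `f = h + conj ∘ g` with `h`, `g` holomorphic. -/
def IsHarmonicMappingOn (f : ℂ → ℂ) (Ω : Set ℂ) : Prop :=
  ∀ z ∈ Ω, ∃ ε > 0, Metric.ball z ε ⊆ Ω ∧ ∃ h g : ℂ → ℂ,
    DifferentiableOn ℂ h (Metric.ball z ε) ∧ DifferentiableOn ℂ g (Metric.ball z ε) ∧
    ∀ w ∈ Metric.ball z ε, f w = h w + (starRingEnd ℂ) (g w)

/-- The harmonic Newton map of `f − η`. -/
def newtonMap (f : ℂ → ℂ) (η : ℂ) (z : ℂ) : ℂ :=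
  z - ((starRingEnd ℂ) (wDz f z) * (f z - η) - wDzbar f z * (starRingEnd ℂ) (f z - η)) /
      (((‖wDz f z‖ ^ 2 - ‖wDzbar f z‖ ^ 2 : ℝ)) : ℂ)

/-- `zstar` attracts `s` under the harmonic Newton map of `f − η`. -/
def NewtonAttracts (f : ℂ → ℂ) (η : ℂ) (s zstar : ℂ) : Prop :=
  Filter.Tendsto (fun k => (newtonMap f η)^[k] s) Filter.atTop (nhds zstar)

/-- Limit of the harmonic Newton iteration started at `s`. -/
def newtonLim (f : ℂ → ℂ) (η : ℂ) (s : ℂ) : ℂ :=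
  limUnder Filter.atTop (fun k => (newtonMap f η)^[k] s)

/-- `S` is a (minimal) prediction set for the solution set `Z` of `f(z) = η`. -/
def IsPredSet (f : ℂ → ℂ) (η : ℂ) (S Z : Set ℂ) : Prop :=
  S.Finite ∧ Z.Finite ∧ S.ncard = Z.ncard ∧
    ∀ z ∈ Z, ∃! s, s ∈ S ∧ NewtonAttracts f η s z

open Complex ComplexConjugate

theorem AnalyticOnNhd.finite_zeros_or_eqOn_zero {𝕜 E : Type*} [NontriviallyNormedField 𝕜]
    [NormedAddCommGroup E] [NormedSpace 𝕜 E] {f : 𝕜 → E} {U K : Set 𝕜}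
    (hf : AnalyticOnNhd 𝕜 f U) (hU : IsPreconnected U) (hK : IsCompact K) (hKU : K ⊆ U) :
    {x ∈ K | f x = 0}.Finite ∨ EqOn f 0 U := by
  refine (hf.eqOn_zero_or_eventually_ne_zero_of_preconnected hU).symm.imp (fun hne ↦ ?_) id
  exact (hK.finite_sdiff_of_mem_codiscreteWithin (codiscreteWithin_mono hKU hne)).subset
    fun x hx ↦ ⟨hx.1, fun hfx ↦ hfx hx.2⟩

theorem analyticOnNhd_re_cexp_mul_deriv_comp {h : ℂ → ℂ} {γ : ℝ → ℂ} {Ω : Set ℂ} {U : Set ℝ}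
    (hh : AnalyticOnNhd ℂ h Ω) (hγ : AnalyticOnNhd ℝ γ U) (hγΩ : MapsTo γ U Ω) :
    AnalyticOnNhd ℝ (fun t : ℝ ↦ 2 * (cexp (I * t / 2) * deriv h (γ t) * deriv γ t).re) U := by
  intro t ht
  have hexp : AnalyticAt ℝ (fun s : ℝ ↦ cexp (I * s / 2)) t :=
    (analyticAt_cexp.comp (by fun_prop : AnalyticAt ℂ (fun z : ℂ ↦ I * z / 2) t)).restrictScalars
      |>.comp (ofRealCLM.analyticAt t)
  have hdh : AnalyticAt ℝ (fun s ↦ deriv h (γ s)) t :=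
    (hh.deriv (γ t) (hγΩ ht)).restrictScalars.comp (hγ t ht)
  exact analyticAt_const.mul <| reCLM.analyticAt _ |>.comp <| (hexp.mul hdh).mul (hγ.deriv t ht)

theorem hasDerivAt_add_conj_comp {h g : ℂ → ℂ} {γ : ℝ → ℂ} {t : ℝ}
    (hh : DifferentiableAt ℂ h (γ t)) (hg : DifferentiableAt ℂ g (γ t))
    (hγ : DifferentiableAt ℝ γ t) :
    HasDerivAt (fun s ↦ h (γ s) + conj (g (γ s)))
      (deriv h (γ t) * deriv γ t + conj (deriv g (γ t) * deriv γ t)) t :=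
  (hh.hasDerivAt.comp t hγ.hasDerivAt).add (hg.hasDerivAt.comp t hγ.hasDerivAt).star

theorem mul_add_conj_cexp_mul (p v : ℂ) (t : ℝ) :
    p * v + conj (cexp (I * t) * p * v) =
      cexp (-(I * t / 2)) * ((2 * (cexp (I * t / 2) * p * v).re : ℝ) : ℂ) := by
  set E := cexp (I * t / 2)
  have hsq : cexp (I * t) = E * E := by rw [← Complex.exp_add]; ring_nf
  have hconj : cexp (-(I * t / 2)) = conj E := by
    rw [← exp_conj, map_div₀, map_mul, conj_I, conj_ofReal, map_ofNat, neg_mul, neg_div]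
  have hunit : conj E * E = 1 := by
    rw [← hconj, ← Complex.exp_add, neg_add_cancel, Complex.exp_zero]
  rw [← add_conj, hconj, hsq]
  simp only [map_mul]
  linear_combination -(p * v) * hunit

/-- On any compact subinterval, ψ has only finitely many zeros or vanishes identically,
and in the latter case f ∘ γ is constant there. -/
theorem psi_finitely_many_zeros_or_constant (Ω : Set ℂ) (hΩ : IsOpen Ω) (h g : ℂ → ℂ)
    (hh : DifferentiableOn ℂ h Ω) (hg : DifferentiableOn ℂ g Ω)
    (f : ℂ → ℂ) (hf : ∀ z, f z = h z + (starRingEnd ℂ) (g z))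
    (a b : ℝ) (γ : ℝ → ℂ)
    (hγΩ : ∀ t ∈ Set.Ioo a b, γ t ∈ Ω)
    (hγ : AnalyticOnNhd ℝ γ (Set.Ioo a b))
    (hcrit : ∀ t ∈ Set.Ioo a b,
      deriv g (γ t) = Complex.exp (Complex.I * (t : ℂ)) * deriv h (γ t))
    (ψ : ℝ → ℝ)
    (hψ : ∀ t : ℝ, ψ t =
      2 * (Complex.exp (Complex.I * (t : ℂ) / 2) * deriv h (γ t) * deriv γ t).re)
    (a' b' : ℝ) (hab : Set.Icc a' b' ⊆ Set.Ioo a b) :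
    {t ∈ Set.Icc a' b' | ψ t = 0}.Finite ∨
    ((∀ t ∈ Set.Icc a' b', ψ t = 0) ∧
      ∀ t₁ ∈ Set.Icc a' b', ∀ t₂ ∈ Set.Icc a' b', f (γ t₁) = f (γ t₂)) := by
  obtain rfl : f = _ := funext hf
  have hψA : AnalyticOnNhd ℝ ψ (Ioo a b) :=
    funext hψ ▸ analyticOnNhd_re_cexp_mul_deriv_comp (hh.analyticOnNhd hΩ) hγ hγΩ
  refine (hψA.finite_zeros_or_eqOn_zero isPreconnected_Ioo isCompact_Icc hab).imp id
    fun hzero ↦ ⟨fun t ht ↦ hzero (hab ht), ?_⟩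
  have hderiv : ∀ t ∈ Ioo a b, HasDerivAt (fun s ↦ h (γ s) + conj (g (γ s))) 0 t := by
    intro t ht
    have hγt := hΩ.mem_nhds (hγΩ t ht)
    have := hasDerivAt_add_conj_comp (hh.differentiableAt hγt) (hg.differentiableAt hγt)
      (hγ t ht).differentiableAt
    rwa [hcrit t ht, mul_add_conj_cexp_mul, ← hψ t, hzero ht, Pi.zero_apply, ofReal_zero,
      mul_zero] at this
  intro t₁ ht₁ t₂ ht₂
  exact isOpen_Ioo.is_const_of_deriv_eq_zero isPreconnected_Ioo
    (fun t ht ↦ (hderiv t ht).differentiableAt.differentiableWithinAt)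
    (fun t ht ↦ (hderiv t ht).deriv) (hab ht₁) (hab ht₂)
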